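/- arXiv:1105.5085 — 6 statements merged into one kernel-verified Lean document; each statement's English description precedes it below -/
import Mathlib

section
/- Let g : [0,1] → ℝ be the indicator function of the interval [e^{−1}, 1]. Then for every ε > 0 there exists a real polynomial q such that q(0) = 0, q(x) ≥ g(x) for all x ∈ [0,1], and ∫_0^1 (q(x) − g(x)) x^{−3/2} dx < ε. -/
/-!
Write `q = X * p`, so that `q(0) = 0` is automatic. Let `r` be the linear ramp rising from `0` at
some `a < c` to `1` at `c = e⁻¹`; then `g ≤ r ≤ g + 1_{(a,c)}`. Since `r` vanishes near `0`,
`r(x)/x` is continuous, and Weierstrass gives `p` with `r/x ≤ p ≤ r/x + η` on `[0,1]`. Hence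
`0 ≤ (q - g) x^{-3/2} ≤ η x^{-1/2} + 1_{(a,c)} x^{-3/2}`, whose integral is at most
`2η + (c - a) a^{-3/2}`, small for small `η` and `a` close to `c`.
-/

open MeasureTheory Set Filter Topology Polynomial

theorem exists_polynomial_between_of_continuousOn {f : ℝ → ℝ} {a b η : ℝ}
    (hf : ContinuousOn f (Icc a b)) (hη : 0 < η) :
    ∃ p : ℝ[X], ∀ x ∈ Icc a b, f x ≤ p.eval x ∧ p.eval x ≤ f x + η := by
  obtain ⟨p, hp⟩ := exists_polynomial_near_of_continuousOn a b (fun x => f x + η / 2)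
    (hf.add continuousOn_const) (η / 2) (half_pos hη)
  refine ⟨p, fun x hx => ?_⟩
  have := abs_lt.mp (hp x hx)
  constructor <;> linarith [this.1, this.2]

theorem exists_continuous_mul_eq_of_eq_zero_of_le {r : ℝ → ℝ} {a : ℝ} (hr : Continuous r)
    (ha : 0 < a) (hr0 : ∀ x ≤ a, r x = 0) :
    ∃ f : ℝ → ℝ, Continuous f ∧ ∀ x, x * f x = r x := by
  have hmax : ∀ x, 0 < max x a := fun x => ha.trans_le (le_max_right x a)
  refine ⟨fun x => r x / max x a, hr.div (continuous_id.max continuous_const)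
    fun x => (hmax x).ne', fun x => ?_⟩
  rcases le_or_gt x a with hxa | hax
  · simp [hr0 x hxa]
  · simp only [max_eq_left hax.le]
    field_simp [(ha.trans hax).ne']

theorem exists_polynomial_eval_zero_between {r : ℝ → ℝ} {a b η : ℝ} (hr : Continuous r)
    (ha : 0 < a) (hr0 : ∀ x ≤ a, r x = 0) (hη : 0 < η) :
    ∃ q : ℝ[X], q.eval 0 = 0 ∧
      ∀ x ∈ Icc 0 b, r x ≤ q.eval x ∧ q.eval x ≤ r x + η * x := by
  obtain ⟨f, hf, hxf⟩ := exists_continuous_mul_eq_of_eq_zero_of_le hr ha hr0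
  obtain ⟨p, hp⟩ :=
    exists_polynomial_between_of_continuousOn hf.continuousOn hη (a := 0) (b := b)
  refine ⟨X * p, by simp, fun x hx => ?_⟩
  obtain ⟨hfp, hpf⟩ := hp x hx
  rw [eval_mul, eval_X, ← hxf x]
  constructor <;> nlinarith [hx.1]

noncomputable def ramp (a c x : ℝ) : ℝ := max 0 (min 1 ((x - a) / (c - a)))

section ramp

variable {a c x : ℝ}

theorem continuous_ramp : Continuous (ramp a c) := by
  unfold ramp; fun_prop

theorem ramp_of_le (hac : a < c) (hx : x ≤ a) : ramp a c x = 0 :=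
  max_eq_left <| (min_le_right _ _).trans <|
    div_nonpos_of_nonpos_of_nonneg (by linarith) (by linarith)

theorem ramp_of_ge (hac : a < c) (hx : c ≤ x) : ramp a c x = 1 := by
  have : 1 ≤ (x - a) / (c - a) := by rw [le_div_iff₀ (by linarith)]; linarith
  simp [ramp, min_eq_left this]

theorem ramp_le_one : ramp a c x ≤ 1 := max_le zero_le_one (min_le_left _ _)

theorem indicator_Icc_le_ramp (hac : a < c) (b : ℝ) :
    (Icc c b).indicator (fun _ => (1 : ℝ)) x ≤ ramp a c x := by
  by_cases hx : x ∈ Icc c b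
  · rw [indicator_of_mem hx, ramp_of_ge hac hx.1]
  · rw [indicator_of_notMem hx]; exact le_max_left _ _

theorem ramp_le_indicator_Icc_add_indicator_Ioo (hac : a < c) {b : ℝ} (hxb : x ≤ b) :
    ramp a c x ≤
      (Icc c b).indicator (fun _ => (1 : ℝ)) x + (Ioo a c).indicator (fun _ => 1) x := by
  rcases le_or_gt c x with hcx | hxc
  · rw [indicator_of_mem (show x ∈ Icc c b from ⟨hcx, hxb⟩)]
    exact le_add_of_le_of_nonneg ramp_le_one (indicator_nonneg (fun _ _ => zero_le_one) x)
  rcases le_or_gt x a with hxa | hax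
  · rw [ramp_of_le hac hxa]
    exact add_nonneg (indicator_nonneg (fun _ _ => zero_le_one) x)
      (indicator_nonneg (fun _ _ => zero_le_one) x)
  · simp [indicator_of_mem (show x ∈ Ioo a c from ⟨hax, hxc⟩), ramp_le_one,
      indicator_of_notMem (show x ∉ Icc c b from fun h => hxc.not_ge h.1)]

end ramp

theorem integrableOn_rpow_neg_one_half :
    IntegrableOn (fun x : ℝ => x ^ (-(1 / 2 : ℝ))) (Ioc 0 1) := by
  rw [← intervalIntegrable_iff_integrableOn_Ioc_of_le zero_le_one]
  exact intervalIntegral.intervalIntegrable_rpow' (by norm_num)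

theorem integral_rpow_neg_one_half : ∫ x in Ioc (0 : ℝ) 1, x ^ (-(1 / 2 : ℝ)) = 2 := by
  rw [← intervalIntegral.integral_of_le zero_le_one, integral_rpow (Or.inl (by norm_num))]
  norm_num

theorem rpow_neg_three_halves_mul_le {x a c η : ℝ} (hx : 0 < x) (ha : 0 < a) :
    (η * x + (Ioo a c).indicator (fun _ => 1) x) * x ^ (-(3 / 2 : ℝ)) ≤
      η * x ^ (-(1 / 2 : ℝ)) + (Ioo a c).indicator (fun _ => a ^ (-(3 / 2 : ℝ))) x := by
  have hpow : x * x ^ (-(3 / 2 : ℝ)) = x ^ (-(1 / 2 : ℝ)) := by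
    rw [← Real.rpow_one_add' hx.le (by norm_num)]; norm_num
  rw [add_mul, mul_assoc, hpow]
  gcongr
  by_cases hxI : x ∈ Ioo a c
  · rw [indicator_of_mem hxI, indicator_of_mem hxI, one_mul]
    exact Real.rpow_le_rpow_of_nonpos ha hxI.1.le (by norm_num)
  · simp [indicator_of_notMem hxI]

theorem setIntegral_mul_rpow_neg_three_halves_le {φ : ℝ → ℝ} {a c η : ℝ} (ha : 0 < a)
    (hac : a ≤ c) (hc : c ≤ 1) (hφ0 : ∀ x ∈ Ioc 0 1, 0 ≤ φ x)
    (hφ : ∀ x ∈ Ioc 0 1, φ x ≤ η * x + (Ioo a c).indicator (fun _ => 1) x) :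
    ∫ x in Ioc (0 : ℝ) 1, φ x * x ^ (-(3 / 2 : ℝ)) ≤
      2 * η + (c - a) * a ^ (-(3 / 2 : ℝ)) := by
  have hIoo : Ioo a c ⊆ Ioc 0 1 := fun x hx => ⟨ha.trans hx.1, hx.2.le.trans hc⟩
  have hsqrt := integrableOn_rpow_neg_one_half.const_mul η
  have hind : IntegrableOn ((Ioo a c).indicator fun _ => a ^ (-(3 / 2 : ℝ))) (Ioc 0 1) :=
    (integrableOn_const measure_Ioc_lt_top.ne).indicator measurableSet_Ioo
  calc ∫ x in Ioc (0 : ℝ) 1, φ x * x ^ (-(3 / 2 : ℝ))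
      ≤ ∫ x in Ioc (0 : ℝ) 1,
          η * x ^ (-(1 / 2 : ℝ)) + (Ioo a c).indicator (fun _ => a ^ (-(3 / 2 : ℝ))) x := by
        refine setIntegral_mono_of_nonneg
          (fun x hx => mul_nonneg (hφ0 x hx) (Real.rpow_nonneg hx.1.le _))
          (fun x hx => ?_) (hsqrt.add hind)
        exact (mul_le_mul_of_nonneg_right (hφ x hx) (Real.rpow_nonneg hx.1.le _)).trans
          (rpow_neg_three_halves_mul_le hx.1 ha)
    _ = 2 * η + (c - a) * a ^ (-(3 / 2 : ℝ)) := by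
        rw [integral_add hsqrt hind, integral_const_mul, integral_rpow_neg_one_half,
          setIntegral_indicator measurableSet_Ioo, inter_eq_right.mpr hIoo, setIntegral_const,
          Real.volume_real_Ioo_of_le hac, smul_eq_mul]
        ring

theorem exists_mem_Ioo_sub_mul_rpow_lt {c : ℝ} (hc : 0 < c) (s : ℝ) {ε : ℝ} (hε : 0 < ε) :
    ∃ a ∈ Ioo 0 c, (c - a) * a ^ s < ε := by
  have hlim : Tendsto (fun a => (c - a) * a ^ s) (𝓝[<] c) (𝓝 0) := by
    have : ContinuousAt (fun a => (c - a) * a ^ s) c :=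
      (continuousAt_const.sub continuousAt_id).mul
        (Real.continuousAt_rpow_const _ _ (Or.inl hc.ne'))
    simpa using this.tendsto.mono_left nhdsWithin_le_nhds
  exact ((hlim.eventually (gt_mem_nhds hε)).and (Ioo_mem_nhdsLT hc)).exists.imp
    fun a h => ⟨h.2, h.1⟩

theorem exists_polynomial_ge_indicator_Icc_setIntegral_lt {c : ℝ} (hc : 0 < c) (hc1 : c ≤ 1)
    {ε : ℝ} (hε : 0 < ε) :
    ∃ q : ℝ[X], q.eval 0 = 0 ∧
      (∀ x ∈ Icc (0 : ℝ) 1, (Icc c 1).indicator (fun _ => (1 : ℝ)) x ≤ q.eval x) ∧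
      (∫ x in Ioc (0 : ℝ) 1,
          (q.eval x - (Icc c 1).indicator (fun _ => (1 : ℝ)) x) * x ^ (-(3 / 2 : ℝ))) < ε := by
  obtain ⟨a, ⟨ha, hac⟩, hsmall⟩ :=
    exists_mem_Ioo_sub_mul_rpow_lt hc (-(3 / 2 : ℝ)) (half_pos hε)
  obtain ⟨q, hq0, hq⟩ := exists_polynomial_eval_zero_between continuous_ramp ha
    (fun x hx => ramp_of_le hac hx) (η := ε / 4) (b := 1) (by positivity)
  have hge : ∀ x ∈ Icc (0 : ℝ) 1, (Icc c 1).indicator (fun _ => (1 : ℝ)) x ≤ q.eval x :=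
    fun x hx => (indicator_Icc_le_ramp hac 1).trans (hq x hx).1
  refine ⟨q, hq0, hge, ?_⟩
  calc _ ≤ 2 * (ε / 4) + (c - a) * a ^ (-(3 / 2 : ℝ)) :=
        setIntegral_mul_rpow_neg_three_halves_le ha hac.le hc1
          (fun x hx => sub_nonneg.2 (hge x (Ioc_subset_Icc_self hx)))
          (fun x hx => by linarith [(hq x (Ioc_subset_Icc_self hx)).2,
            ramp_le_indicator_Icc_add_indicator_Ioo hac hx.2])
    _ < ε := by linarith

/-- Polynomial approximation from above of the indicator function
`g = 1_{[e^{-1},1]}` with small weighted error: for every `ε > 0` there is a real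
polynomial `q` with `q(0) = 0`, `q ≥ g` on `[0,1]`, and
`∫_0^1 (q(x) − g(x)) x^{-3/2} dx < ε`. -/
theorem stmt4 :
    ∀ ε > (0:ℝ), ∃ q : Polynomial ℝ,
      q.eval 0 = 0 ∧
      (∀ x ∈ Set.Icc (0:ℝ) 1,
        Set.indicator (Set.Icc (Real.exp (-1)) 1) (fun _ => (1:ℝ)) x ≤ q.eval x) ∧
      (∫ x in Set.Ioc (0:ℝ) 1,
          (q.eval x - Set.indicator (Set.Icc (Real.exp (-1)) 1) (fun _ => (1:ℝ)) x)
            * x ^ (-(3 / 2 : ℝ))) < ε := fun _ hε =>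
  exists_polynomial_ge_indicator_Icc_setIntegral_lt (Real.exp_pos _)
    (Real.exp_le_one_iff.2 (by norm_num)) hε
end

section
/- Fix γ ∈ (0, 1/2). For integers n ≥ 1 define A(n) = 1 − 2 e^{−1/n} cos(n^{−γ}) + e^{−2/n} and, for real θ, A(θ,n) = 1 − 2 e^{iθ} cos(n^{−γ}) + e^{2iθ}. Then there exists a constant C > 0 such that for all n ≥ 2: (a) A(n)^{−1} ≤ C n^{2γ}, and |A(θ,n)| ≤ C A(n) for all θ with |θ| ≤ n^{−γ}; (b) |A(θ,n)^2 − A(n)^2| ≤ C A(n)^2 / n for all θ with |θ| ≤ 1/n; (c) |A(θ,n)^2 − A(n)^2| ≤ C A(n)^2 n^{2γ} |θ|^{2γ+1} for all θ with 1/n ≤ |θ| ≤ n^{−γ}. -/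
open Complex Real

/-!
Write `x = n^{-γ}`, `b = e^{-1/n}`, `z = e^{iθ}` and `q(z) = 1 - 2z cos x + z²`, so that
`A(θ,n) = q(z)` and `A(n) = q(b) = (1 - b)² + 2b(1 - cos x) ≥ x²/5`. Since
`q(z) = (z - e^{ix})(z - e^{-ix})`, `|A(θ,n)| ≤ (|θ| + x)²`; since `q(z) - q(b) = (z - b)(z + b - 2cos x)`
and `1 - b ≤ 1/n`, `|A(θ,n) - A(n)| ≤ (|θ| + 1/n)(|θ| + 1/n + x²)`. The estimates follow by writing
`A(θ,n)² - A(n)² = (A(θ,n) + A(n))(A(θ,n) - A(n))` and using `x² n^{2γ} = 1` and `1/n ≤ x²`, the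
latter being where `γ ≤ 1/2` enters.
-/

noncomputable def quad (c : ℝ) (z : ℂ) : ℂ := 1 - 2 * z * c + z ^ 2

lemma norm_exp_ofReal_mul_I_sub_one_le (θ : ℝ) : ‖cexp (θ * I) - 1‖ ≤ |θ| := by
  simpa [mul_comm] using Real.norm_exp_I_mul_ofReal_sub_one_le (x := θ)

lemma quad_cos_eq (x : ℝ) (z : ℂ) :
    quad (Real.cos x) z = (z - cexp (x * I)) * (z - cexp (-x * I)) := by
  have hprod : cexp (x * I) * cexp (-x * I) = 1 := by rw [← Complex.exp_add]; simp
  have hsum : cexp (x * I) + cexp (-x * I) = 2 * (Real.cos x : ℂ) := by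
    rw [Complex.ofReal_cos, Complex.two_cos]
  unfold quad
  linear_combination z * hsum - hprod

lemma quad_sub_quad (c : ℝ) (z w : ℂ) : quad c z - quad c w = (z - w) * (z + w - 2 * c) := by
  unfold quad; ring

lemma norm_quad_cos_exp_le (x θ : ℝ) : ‖quad (Real.cos x) (cexp (θ * I))‖ ≤ (|θ| + |x|) ^ 2 := by
  have hdist (y : ℝ) : ‖cexp (θ * I) - cexp (y * I)‖ ≤ |θ| + |y| := by
    calc ‖cexp (θ * I) - cexp (y * I)‖ = ‖(cexp (θ * I) - 1) - (cexp (y * I) - 1)‖ := by ring_nf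
      _ ≤ ‖cexp (θ * I) - 1‖ + ‖cexp (y * I) - 1‖ := norm_sub_le _ _
      _ ≤ |θ| + |y| := add_le_add (norm_exp_ofReal_mul_I_sub_one_le θ)
          (norm_exp_ofReal_mul_I_sub_one_le y)
  have hneg := hdist (-x)
  rw [abs_neg, ofReal_neg] at hneg
  rw [quad_cos_eq, norm_mul, sq]
  exact mul_le_mul (hdist x) hneg (norm_nonneg _) (by positivity)

lemma norm_quad_cos_exp_sub_quad_le (x θ b : ℝ) :
    ‖quad (Real.cos x) (cexp (θ * I)) - quad (Real.cos x) b‖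
      ≤ (|θ| + |1 - b|) * (|θ| + |1 - b| + 2 * (1 - Real.cos x)) := by
  have hz := norm_exp_ofReal_mul_I_sub_one_le θ
  have hc : 0 ≤ 1 - Real.cos x := by linarith [Real.cos_le_one x]
  have hb : ‖((1 - b : ℝ) : ℂ)‖ = |1 - b| := by rw [Complex.norm_real, Real.norm_eq_abs]
  have hcb : ‖((2 * (1 - Real.cos x) : ℝ) : ℂ)‖ = 2 * (1 - Real.cos x) := by
    rw [Complex.norm_real, Real.norm_eq_abs, abs_of_nonneg (by positivity)]
  have h₁ : ‖cexp (θ * I) - b‖ ≤ |θ| + |1 - b| :=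
    calc ‖cexp (θ * I) - b‖ = ‖(cexp (θ * I) - 1) + ((1 - b : ℝ) : ℂ)‖ := by push_cast; ring_nf
      _ ≤ |θ| + |1 - b| := (norm_add_le _ _).trans (by rw [hb]; linarith)
  have h₂ : ‖cexp (θ * I) + b - 2 * (Real.cos x : ℂ)‖ ≤ |θ| + |1 - b| + 2 * (1 - Real.cos x) :=
    calc ‖cexp (θ * I) + b - 2 * (Real.cos x : ℂ)‖
        = ‖(cexp (θ * I) - 1) - ((1 - b : ℝ) : ℂ) + ((2 * (1 - Real.cos x) : ℝ) : ℂ)‖ := by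
          push_cast; ring_nf
      _ ≤ ‖cexp (θ * I) - 1‖ + ‖((1 - b : ℝ) : ℂ)‖ + ‖((2 * (1 - Real.cos x) : ℝ) : ℂ)‖ :=
          (norm_add_le _ _).trans (add_le_add_left (norm_sub_le _ _) _)
      _ ≤ |θ| + |1 - b| + 2 * (1 - Real.cos x) := by rw [hb, hcb]; linarith
  rw [quad_sub_quad, norm_mul]
  exact mul_le_mul h₁ h₂ (norm_nonneg _) (by positivity)

lemma sq_rpow_neg_mul_rpow {N : ℝ} (hN : 0 < N) (γ : ℝ) : (N ^ (-γ)) ^ 2 * N ^ (2 * γ) = 1 := by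
  rw [← Real.rpow_natCast, ← Real.rpow_mul hN.le, ← Real.rpow_add hN]
  convert Real.rpow_zero N using 2
  push_cast; ring

lemma sq_rpow_neg_le_rpow {N t γ : ℝ} (hN : 0 < N) (ht : 1 / N ≤ t) (hγ : 0 ≤ γ) :
    (N ^ (-γ)) ^ 2 ≤ t ^ (2 * γ) := by
  have h : (N ^ (-γ)) ^ 2 = (1 / N) ^ (2 * γ) := by
    rw [← Real.rpow_natCast, ← Real.rpow_mul hN.le, one_div, Real.inv_rpow hN.le,
      ← Real.rpow_neg hN.le]
    push_cast; ring_nf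
  rw [h]
  exact Real.rpow_le_rpow (by positivity) ht (by linarith)

lemma inv_le_sq_rpow_neg {N γ : ℝ} (hN : 1 ≤ N) (hγ : γ ≤ 1 / 2) : 1 / N ≤ (N ^ (-γ)) ^ 2 := by
  rw [← Real.rpow_natCast, ← Real.rpow_mul (by linarith), one_div, ← Real.rpow_neg_one]
  exact Real.rpow_le_rpow_of_exponent_le hN (by push_cast; linarith)

lemma one_sub_exp_neg_le (t : ℝ) : 1 - Real.exp (-t) ≤ t := by
  linarith [Real.add_one_le_exp (-t)]

noncomputable def realA (γ : ℝ) (n : ℕ) : ℝ :=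
  1 - 2 * Real.exp (-(1 / (n:ℝ))) * Real.cos ((n:ℝ) ^ (-γ)) + Real.exp (-(2 / (n:ℝ)))

noncomputable def complexA (γ : ℝ) (n : ℕ) (θ : ℝ) : ℂ :=
  1 - 2 * Complex.exp (θ * Complex.I) * (Real.cos ((n:ℝ) ^ (-γ)) : ℂ)
    + Complex.exp (2 * θ * Complex.I)

section

variable {γ : ℝ} {n : ℕ} {θ : ℝ}

lemma exp_neg_two_div (n : ℕ) : Real.exp (-(2 / (n:ℝ))) = Real.exp (-(1 / (n:ℝ))) ^ 2 := by
  rw [← Real.exp_nat_mul]; ring_nf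

lemma complexA_eq_quad : complexA γ n θ = quad (Real.cos ((n:ℝ) ^ (-γ))) (cexp (θ * I)) := by
  rw [complexA, quad, ← Complex.exp_nat_mul]; ring_nf

lemma ofReal_realA :
    (realA γ n : ℂ) = quad (Real.cos ((n:ℝ) ^ (-γ))) (Real.exp (-(1 / (n:ℝ))) : ℝ) := by
  rw [realA, quad, exp_neg_two_div]; push_cast; ring

lemma realA_eq : realA γ n = (1 - Real.exp (-(1 / (n:ℝ)))) ^ 2
    + 2 * Real.exp (-(1 / (n:ℝ))) * (1 - Real.cos ((n:ℝ) ^ (-γ))) := by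
  rw [realA, exp_neg_two_div]; ring

lemma sq_div_five_le_realA (hn : 2 ≤ n) (hγ : 0 ≤ γ) : ((n:ℝ) ^ (-γ)) ^ 2 / 5 ≤ realA γ n := by
  rw [realA_eq]
  set x := (n:ℝ) ^ (-γ)
  have hn' : (2:ℝ) ≤ n := by exact_mod_cast hn
  have hx : |x| ≤ π := by
    rw [abs_of_nonneg (by positivity)]
    linarith [Real.rpow_le_one_of_one_le_of_nonpos (by linarith : (1:ℝ) ≤ n) (neg_nonpos.2 hγ),
      Real.pi_gt_three]
  have hcos : x ^ 2 / 5 ≤ 1 - Real.cos x := by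
    have h := Real.cos_le_one_sub_mul_cos_sq hx
    have hπ : 2 / π ^ 2 ≥ 1 / 5 := by
      rw [ge_iff_le, div_le_div_iff₀ (by norm_num) (by positivity)]
      nlinarith [Real.pi_lt_d2, Real.pi_gt_three]
    nlinarith [sq_nonneg x]
  have hb : 1 / 2 ≤ Real.exp (-(1 / (n:ℝ))) := by
    have : 1 / (n:ℝ) ≤ 1 / 2 := one_div_le_one_div_of_le (by norm_num) hn'
    linarith [one_sub_exp_neg_le (1 / (n:ℝ))]
  nlinarith [sq_nonneg (1 - Real.exp (-(1 / (n:ℝ))))]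

lemma realA_pos (hn : 2 ≤ n) (hγ : 0 ≤ γ) : 0 < realA γ n := by
  have hx : 0 < (n:ℝ) ^ (-γ) := Real.rpow_pos_of_pos (by positivity) _
  exact lt_of_lt_of_le (by positivity) (sq_div_five_le_realA hn hγ)

lemma norm_complexA_le : ‖complexA γ n θ‖ ≤ (|θ| + (n:ℝ) ^ (-γ)) ^ 2 := by
  have h := norm_quad_cos_exp_le ((n:ℝ) ^ (-γ)) θ
  rwa [abs_of_nonneg (Real.rpow_nonneg n.cast_nonneg _), ← complexA_eq_quad] at h

lemma norm_complexA_sub_realA_le :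
    ‖complexA γ n θ - realA γ n‖
      ≤ (|θ| + 1 / (n:ℝ)) * (|θ| + 1 / (n:ℝ) + ((n:ℝ) ^ (-γ)) ^ 2) := by
  set x := (n:ℝ) ^ (-γ)
  set b := Real.exp (-(1 / (n:ℝ)))
  have hb : |1 - b| ≤ 1 / (n:ℝ) := by
    rw [abs_of_nonneg (by simp only [b, sub_nonneg, Real.exp_le_one_iff, neg_nonpos]; positivity)]
    exact one_sub_exp_neg_le _
  have hcos : 2 * (1 - Real.cos x) ≤ x ^ 2 := by
    linarith [Real.one_sub_sq_div_two_le_cos (x := x)]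
  have hc : 0 ≤ 1 - Real.cos x := by linarith [Real.cos_le_one x]
  rw [complexA_eq_quad, ofReal_realA]
  refine (norm_quad_cos_exp_sub_quad_le x θ b).trans ?_
  gcongr

lemma inv_realA_le (hn : 2 ≤ n) (hγ : 0 ≤ γ) : (realA γ n)⁻¹ ≤ 5 * (n:ℝ) ^ (2 * γ) := by
  have hn0 : (0:ℝ) < n := by positivity
  have hx0 : 0 < ((n:ℝ) ^ (-γ)) ^ 2 := by have := Real.rpow_pos_of_pos hn0 (-γ); positivity
  calc (realA γ n)⁻¹ ≤ (((n:ℝ) ^ (-γ)) ^ 2 / 5)⁻¹ :=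
        inv_anti₀ (by positivity) (sq_div_five_le_realA hn hγ)
    _ = 5 * (n:ℝ) ^ (2 * γ) := by
        rw [inv_div, div_eq_iff hx0.ne', mul_assoc, mul_comm ((n:ℝ) ^ (2 * γ)),
          sq_rpow_neg_mul_rpow hn0, mul_one]

lemma norm_complexA_le_realA (hn : 2 ≤ n) (hγ : 0 ≤ γ) (hθ : |θ| ≤ (n:ℝ) ^ (-γ)) :
    ‖complexA γ n θ‖ ≤ 20 * realA γ n :=
  calc ‖complexA γ n θ‖ ≤ (|θ| + (n:ℝ) ^ (-γ)) ^ 2 := norm_complexA_le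
    _ ≤ (2 * (n:ℝ) ^ (-γ)) ^ 2 := by gcongr; linarith
    _ ≤ 20 * realA γ n := by linarith [sq_div_five_le_realA hn hγ]

lemma norm_complexA_add_realA_le (hn : 2 ≤ n) (hγ : 0 ≤ γ) (hθ : |θ| ≤ (n:ℝ) ^ (-γ)) :
    ‖complexA γ n θ + realA γ n‖ ≤ 21 * realA γ n := by
  have hA : ‖(realA γ n : ℂ)‖ = realA γ n := by
    rw [Complex.norm_real, Real.norm_eq_abs, abs_of_pos (realA_pos hn hγ)]
  linarith [norm_add_le (complexA γ n θ) (realA γ n), norm_complexA_le_realA hn hγ hθ]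

lemma norm_complexA_sq_sub_realA_sq_le_div (hn : 2 ≤ n) (hγ₀ : 0 ≤ γ) (hγ₁ : γ ≤ 1 / 2)
    (hθ : |θ| ≤ 1 / (n:ℝ)) :
    ‖complexA γ n θ ^ 2 - (realA γ n : ℂ) ^ 2‖ ≤ 630 * realA γ n ^ 2 / n := by
  have hn1 : (1:ℝ) ≤ n := by exact_mod_cast (by omega : 1 ≤ n)
  have hu : 1 / (n:ℝ) ≤ ((n:ℝ) ^ (-γ)) ^ 2 := inv_le_sq_rpow_neg hn1 hγ₁
  have hx : ((n:ℝ) ^ (-γ)) ^ 2 ≤ 5 * realA γ n := by linarith [sq_div_five_le_realA hn hγ₀]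
  have hθx : |θ| ≤ (n:ℝ) ^ (-γ) := by
    refine hθ.trans (hu.trans ?_)
    have := Real.rpow_le_one_of_one_le_of_nonpos hn1 (neg_nonpos.2 hγ₀)
    nlinarith [Real.rpow_nonneg (zero_le_one.trans hn1) (-γ)]
  have hsub : ‖complexA γ n θ - realA γ n‖ ≤ 30 * realA γ n * (1 / n) :=
    calc ‖complexA γ n θ - realA γ n‖
        ≤ (|θ| + 1 / (n:ℝ)) * (|θ| + 1 / (n:ℝ) + ((n:ℝ) ^ (-γ)) ^ 2) :=
          norm_complexA_sub_realA_le
      _ ≤ (2 * (1 / n)) * (3 * ((n:ℝ) ^ (-γ)) ^ 2) := by gcongr <;> linarith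
      _ ≤ 30 * realA γ n * (1 / n) := by nlinarith [one_div_pos.2 (by linarith : (0:ℝ) < n)]
  rw [sq_sub_sq, norm_mul, ← mul_one_div]
  calc ‖complexA γ n θ + realA γ n‖ * ‖complexA γ n θ - realA γ n‖
      ≤ 21 * realA γ n * (30 * realA γ n * (1 / n)) :=
        mul_le_mul (norm_complexA_add_realA_le hn hγ₀ hθx) hsub (norm_nonneg _)
          (by linarith [realA_pos hn hγ₀])
    _ = 630 * realA γ n ^ 2 * (1 / n) := by ring

lemma norm_complexA_sq_sub_realA_sq_le_rpow (hn : 2 ≤ n) (hγ₀ : 0 ≤ γ) (hγ₁ : γ ≤ 1 / 2)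
    (hθ₁ : 1 / (n:ℝ) ≤ |θ|) (hθ₂ : |θ| ≤ (n:ℝ) ^ (-γ)) :
    ‖complexA γ n θ ^ 2 - (realA γ n : ℂ) ^ 2‖
      ≤ 630 * realA γ n ^ 2 * (n:ℝ) ^ (2 * γ) * |θ| ^ (2 * γ + 1) := by
  have hn0 : (0:ℝ) < n := by positivity
  have hθ0 : 0 < |θ| := lt_of_lt_of_le (by positivity) hθ₁
  set T := |θ| ^ (2 * γ + 1) with hT
  have hθsq : θ ^ 2 ≤ T := by
    have hθ1 : |θ| ≤ 1 :=
      hθ₂.trans (Real.rpow_le_one_of_one_le_of_nonpos (by exact_mod_cast (by omega : 1 ≤ n))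
        (neg_nonpos.2 hγ₀))
    have h := Real.rpow_le_rpow_of_exponent_ge hθ0 hθ1 (by linarith : 2 * γ + 1 ≤ 2)
    rwa [Real.rpow_two, sq_abs] at h
  have hθx : |θ| * ((n:ℝ) ^ (-γ)) ^ 2 ≤ T := by
    rw [hT, Real.rpow_add hθ0, Real.rpow_one, mul_comm (|θ| ^ (2 * γ))]
    exact mul_le_mul_of_nonneg_left (sq_rpow_neg_le_rpow hn0 hθ₁ hγ₀) hθ0.le
  have hsub : ‖complexA γ n θ - realA γ n‖ ≤ 6 * T :=
    calc ‖complexA γ n θ - realA γ n‖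
        ≤ (|θ| + 1 / (n:ℝ)) * (|θ| + 1 / (n:ℝ) + ((n:ℝ) ^ (-γ)) ^ 2) :=
          norm_complexA_sub_realA_le
      _ ≤ (2 * |θ|) * (2 * |θ| + ((n:ℝ) ^ (-γ)) ^ 2) := by gcongr <;> linarith
      _ ≤ 6 * T := by nlinarith [sq_abs θ]
  have hA : 1 ≤ 5 * realA γ n * (n:ℝ) ^ (2 * γ) := by
    have := mul_le_mul_of_nonneg_right (sq_div_five_le_realA hn hγ₀)
      (Real.rpow_nonneg hn0.le (2 * γ))
    rw [div_mul_eq_mul_div, sq_rpow_neg_mul_rpow hn0] at this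
    linarith
  have hApos := realA_pos hn hγ₀
  rw [sq_sub_sq, norm_mul]
  calc ‖complexA γ n θ + realA γ n‖ * ‖complexA γ n θ - realA γ n‖
      ≤ 21 * realA γ n * (6 * T) :=
        mul_le_mul (norm_complexA_add_realA_le hn hγ₀ hθ₂) hsub (norm_nonneg _) (by positivity)
    _ = 126 * realA γ n * T * 1 := by ring
    _ ≤ 126 * realA γ n * T * (5 * realA γ n * (n:ℝ) ^ (2 * γ)) := by gcongr
    _ = 630 * realA γ n ^ 2 * (n:ℝ) ^ (2 * γ) * T := by ring

end

/-- Estimates on `A(n) = 1 - 2e^{-1/n}cos(n^{-γ}) + e^{-2/n}` and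
`A(θ,n) = 1 - 2e^{iθ}cos(n^{-γ}) + e^{2iθ}` for `γ ∈ (0,1/2)`:
(a) `A(n)⁻¹ ≤ C n^{2γ}` and `|A(θ,n)| ≤ C A(n)` for `|θ| ≤ n^{-γ}`;
(b) `|A(θ,n)² - A(n)²| ≤ C A(n)²/n` for `|θ| ≤ 1/n`;
(c) `|A(θ,n)² - A(n)²| ≤ C A(n)² n^{2γ} |θ|^{2γ+1}` for `1/n ≤ |θ| ≤ n^{-γ}`. -/
theorem stmt11 (γ : ℝ) (hγ : γ ∈ Set.Ioo (0:ℝ) (1 / 2)) :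
    ∃ C > (0:ℝ), ∀ n : ℕ, 2 ≤ n →
      (1 - 2 * Real.exp (-(1 / (n:ℝ))) * Real.cos ((n:ℝ) ^ (-γ))
          + Real.exp (-(2 / (n:ℝ))))⁻¹ ≤ C * (n:ℝ) ^ (2 * γ)
      ∧ (∀ θ : ℝ, |θ| ≤ (n:ℝ) ^ (-γ) →
          ‖(1 - 2 * Complex.exp (θ * Complex.I) * (Real.cos ((n:ℝ) ^ (-γ)) : ℂ)
              + Complex.exp (2 * θ * Complex.I))‖
            ≤ C * (1 - 2 * Real.exp (-(1 / (n:ℝ))) * Real.cos ((n:ℝ) ^ (-γ))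
                + Real.exp (-(2 / (n:ℝ)))))
      ∧ (∀ θ : ℝ, |θ| ≤ 1 / (n:ℝ) →
          ‖((1 - 2 * Complex.exp (θ * Complex.I) * (Real.cos ((n:ℝ) ^ (-γ)) : ℂ)
                + Complex.exp (2 * θ * Complex.I)) ^ 2
              - ((1 - 2 * Real.exp (-(1 / (n:ℝ))) * Real.cos ((n:ℝ) ^ (-γ))
                + Real.exp (-(2 / (n:ℝ))) : ℝ) : ℂ) ^ 2)‖
            ≤ C * (1 - 2 * Real.exp (-(1 / (n:ℝ))) * Real.cos ((n:ℝ) ^ (-γ))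
                + Real.exp (-(2 / (n:ℝ)))) ^ 2 / (n:ℝ))
      ∧ (∀ θ : ℝ, 1 / (n:ℝ) ≤ |θ| → |θ| ≤ (n:ℝ) ^ (-γ) →
          ‖((1 - 2 * Complex.exp (θ * Complex.I) * (Real.cos ((n:ℝ) ^ (-γ)) : ℂ)
                + Complex.exp (2 * θ * Complex.I)) ^ 2
              - ((1 - 2 * Real.exp (-(1 / (n:ℝ))) * Real.cos ((n:ℝ) ^ (-γ))
                + Real.exp (-(2 / (n:ℝ))) : ℝ) : ℂ) ^ 2)‖
            ≤ C * (1 - 2 * Real.exp (-(1 / (n:ℝ))) * Real.cos ((n:ℝ) ^ (-γ))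
                + Real.exp (-(2 / (n:ℝ)))) ^ 2 * (n:ℝ) ^ (2 * γ) * |θ| ^ (2 * γ + 1)) := by
  obtain ⟨hγ₀, hγ₁⟩ := hγ
  refine ⟨630, by norm_num, fun n hn => ⟨?_, fun θ hθ => ?_, fun θ hθ => ?_, fun θ hθ₁ hθ₂ => ?_⟩⟩
  · exact (inv_realA_le hn hγ₀.le).trans
      (mul_le_mul_of_nonneg_right (by norm_num) (Real.rpow_nonneg n.cast_nonneg _))
  · exact (norm_complexA_le_realA hn hγ₀.le hθ).trans
      (mul_le_mul_of_nonneg_right (by norm_num) (realA_pos hn hγ₀.le).le)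
  · exact norm_complexA_sq_sub_realA_sq_le_div hn hγ₀.le hγ₁.le hθ
  · exact norm_complexA_sq_sub_realA_sq_le_rpow hn hγ₀.le hγ₁.le hθ₁ hθ₂
end

section
/- Let β ∈ (0,1), and fix u > 0 and θ ∈ ℝ with θ ≠ 0. Then there is a constant C > 0 (which may depend on β, u, θ) such that for all R ≥ 1: |∫_0^R e^{−(u−iθ)x} ((u−iθ)x)^{−β} (u−iθ) dx − Γ(1−β)| ≤ C R^{−β}. -/
/-!
For `0 < re a` and `0 < re w`, the Laplace transform `∫₀^∞ t^(a-1) e^(-w t) dt` equals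
`w^(-a) Γ(a)`: both sides are holomorphic in `w` on the right half-plane and agree on the
positive reals, so they agree everywhere by the identity theorem. As `(w x)^(-β) w` equals
`w^(1-β) x^(-β)` for `x > 0`, the truncated integral is `Γ(1-β)` minus `w^(1-β)` times the tail
`∫_R^∞ t^(-β) e^(-w t) dt`, and since `t^(-β) ≤ R^(-β)` on the tail, the latter has modulus at
most `R^(-β) e^(-u R) / u`.
-/

open Complex Real MeasureTheory Set Filter Topology

lemma integrableOn_rpow_mul_exp_neg_mul_Ioi {s b : ℝ} (hs : -1 < s) (hb : 0 < b) :
    IntegrableOn (fun t : ℝ ↦ t ^ s * Real.exp (-(b * t))) (Ioi 0) := by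
  simpa [neg_mul] using integrableOn_rpow_mul_exp_neg_mul_rpow hs zero_lt_one hb

namespace Complex

lemma mul_ofReal_cpow {w : ℂ} (hw : w ≠ 0) {x : ℝ} (hx : 0 < x) (s : ℂ) :
    (w * x) ^ s = w ^ s * (x : ℂ) ^ s := by
  have hx0 : (x : ℂ) ≠ 0 := ofReal_ne_zero.2 hx.ne'
  rw [cpow_def_of_ne_zero (mul_ne_zero hw hx0), log_mul_ofReal x hx w hw, cpow_def_of_ne_zero hw,
    cpow_def_of_ne_zero hx0, ← ofReal_log hx.le, ← exp_add]
  ring_nf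

lemma norm_ofReal_cpow_mul_cexp_neg_mul {t : ℝ} (ht : 0 < t) (a w : ℂ) :
    ‖(t : ℂ) ^ a * cexp (-(w * t))‖ = t ^ a.re * Real.exp (-(w.re * t)) := by
  rw [norm_mul, norm_cpow_eq_rpow_re_of_pos ht, norm_exp]
  simp

lemma continuousOn_ofReal_cpow_mul_cexp_neg_mul (a w : ℂ) :
    ContinuousOn (fun t : ℝ ↦ (t : ℂ) ^ a * cexp (-(w * t))) (Ioi 0) := by
  refine ContinuousOn.mul ?_ (by fun_prop)
  exact continuous_ofReal.continuousOn.cpow_const fun t ht ↦ ofReal_mem_slitPlane.2 ht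

lemma integrableOn_ofReal_cpow_mul_cexp_neg_mul_Ioi {a w : ℂ} (ha : 0 < a.re) (hw : 0 < w.re) :
    IntegrableOn (fun t : ℝ ↦ (t : ℂ) ^ (a - 1) * cexp (-(w * t))) (Ioi 0) := by
  refine (integrableOn_rpow_mul_exp_neg_mul_Ioi (s := a.re - 1) (by linarith) hw).mono'
    ((continuousOn_ofReal_cpow_mul_cexp_neg_mul _ w).aestronglyMeasurable measurableSet_Ioi) ?_
  refine (ae_restrict_iff' measurableSet_Ioi).2 (.of_forall fun t ht ↦ ?_)
  rw [norm_ofReal_cpow_mul_cexp_neg_mul ht]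
  simp

lemma hasDerivAt_cexp_neg_mul_ofReal (w : ℂ) (t : ℝ) :
    HasDerivAt (fun w : ℂ ↦ cexp (-(w * t))) (-(t * cexp (-(w * t)))) w := by
  simpa [mul_comm] using ((hasDerivAt_id w).mul_const (t : ℂ)).neg.cexp

lemma differentiableAt_integral_ofReal_cpow_mul_cexp_neg_mul {a w₀ : ℂ} (ha : 0 < a.re)
    (hw₀ : 0 < w₀.re) :
    DifferentiableAt ℂ (fun w ↦ ∫ t in Ioi (0 : ℝ), (t : ℂ) ^ (a - 1) * cexp (-(w * t))) w₀ := by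
  set ε := w₀.re / 2 with hε_def
  have hε : 0 < ε := half_pos hw₀
  have hre : ∀ w ∈ Metric.ball w₀ ε, ε ≤ w.re := fun w hw ↦ by
    have := (abs_re_le_norm (w - w₀)).trans_lt (mem_ball_iff_norm.1 hw)
    rw [sub_re, abs_lt] at this
    linarith
  refine (hasDerivAt_integral_of_dominated_loc_of_deriv_le
    (F' := fun w t ↦ -((t : ℂ) ^ a * cexp (-(w * t))))
    (bound := fun t : ℝ ↦ t ^ a.re * Real.exp (-(ε * t))) (Metric.ball_mem_nhds w₀ hε)
    (.of_forall fun w ↦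
      (continuousOn_ofReal_cpow_mul_cexp_neg_mul _ w).aestronglyMeasurable measurableSet_Ioi)
    (integrableOn_ofReal_cpow_mul_cexp_neg_mul_Ioi ha hw₀)
    ((continuousOn_ofReal_cpow_mul_cexp_neg_mul a w₀).neg.aestronglyMeasurable measurableSet_Ioi)
    ?_ (integrableOn_rpow_mul_exp_neg_mul_Ioi (by linarith) hε) ?_).2.differentiableAt
  · refine (ae_restrict_iff' measurableSet_Ioi).2 (.of_forall fun t (ht : 0 < t) w hw ↦ ?_)
    rw [norm_neg, norm_ofReal_cpow_mul_cexp_neg_mul ht]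
    gcongr
    exact hre w hw
  · refine (ae_restrict_iff' measurableSet_Ioi).2 (.of_forall fun t ht w _ ↦ ?_)
    have ht0 : (t : ℂ) ≠ 0 := ofReal_ne_zero.2 (ne_of_gt ht)
    refine ((hasDerivAt_cexp_neg_mul_ofReal w t).const_mul ((t : ℂ) ^ (a - 1))).congr_deriv ?_
    rw [cpow_sub _ _ ht0, cpow_one]
    field_simp

lemma frequently_ofReal_pos_nhdsNE_one {p : ℂ → Prop} (hp : ∀ r : ℝ, 0 < r → p r) :
    ∃ᶠ z in 𝓝[≠] (1 : ℂ), p z := by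
  have hmap : Tendsto ((↑) : ℝ → ℂ) (𝓝[≠] 1) (𝓝[≠] 1) :=
    tendsto_nhdsWithin_of_tendsto_nhds_of_eventually_within _
      ((continuous_ofReal.tendsto' 1 1 ofReal_one).mono_left nhdsWithin_le_nhds)
      (eventually_nhdsWithin_of_forall fun r hr ↦ by simpa using hr)
  refine hmap.frequently (Eventually.frequently ?_)
  filter_upwards [nhdsWithin_le_nhds (Ioi_mem_nhds zero_lt_one)] with r hr using hp r hr

lemma integral_ofReal_cpow_mul_cexp_neg_mul_Ioi {a w : ℂ} (ha : 0 < a.re) (hw : 0 < w.re) :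
    ∫ t in Ioi (0 : ℝ), (t : ℂ) ^ (a - 1) * cexp (-(w * t)) = w ^ (-a) * Gamma a := by
  have hU : IsOpen {z : ℂ | 0 < z.re} := isOpen_lt continuous_const continuous_re
  refine AnalyticOnNhd.eqOn_of_preconnected_of_frequently_eq (z₀ := 1)
    (f := fun w ↦ ∫ t in Ioi (0 : ℝ), (t : ℂ) ^ (a - 1) * cexp (-(w * t)))
    (g := fun w ↦ w ^ (-a) * Gamma a) ?_ ?_ (convex_halfSpace_re_gt 0).isPreconnected
    (by simp) ?_ hw
  · refine DifferentiableOn.analyticOnNhd (fun w hw ↦ ?_) hU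
    exact (differentiableAt_integral_ofReal_cpow_mul_cexp_neg_mul ha hw).differentiableWithinAt
  · refine DifferentiableOn.analyticOnNhd (fun w (hw : 0 < w.re) ↦ ?_) hU
    exact ((differentiableAt_id.cpow_const (Or.inl hw)).mul_const _).differentiableWithinAt
  · refine frequently_ofReal_pos_nhdsNE_one fun r hr ↦ ?_
    have harg : ((r : ℂ)).arg ≠ π := by simp [arg_ofReal_of_nonneg hr.le, pi_ne_zero.symm]
    rw [integral_cpow_mul_exp_neg_mul_Ioi ha hr, one_div, inv_cpow _ _ harg, cpow_neg]

lemma norm_integral_Ioi_ofReal_cpow_mul_cexp_neg_mul_le {s w : ℂ} (hs : 0 ≤ s.re)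
    (hw : 0 < w.re) {R : ℝ} (hR : 0 < R) :
    ‖∫ t in Ioi R, (t : ℂ) ^ (-s) * cexp (-(w * t))‖
      ≤ R ^ (-s.re) * Real.exp (-(w.re * R)) / w.re := by
  calc ‖∫ t in Ioi R, (t : ℂ) ^ (-s) * cexp (-(w * t))‖
      ≤ ∫ t in Ioi R, R ^ (-s.re) * Real.exp (-w.re * t) := by
        refine norm_integral_le_of_norm_le
          ((integrableOn_exp_mul_Ioi (neg_lt_zero.2 hw) R).const_mul _) ?_
        refine (ae_restrict_iff' measurableSet_Ioi).2 (.of_forall fun t (ht : R < t) ↦ ?_)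
        rw [norm_ofReal_cpow_mul_cexp_neg_mul (hR.trans ht), neg_re, neg_mul]
        exact mul_le_mul_of_nonneg_right (Real.rpow_le_rpow_of_nonpos hR ht.le (neg_nonpos.2 hs))
          (Real.exp_pos _).le
    _ = R ^ (-s.re) * Real.exp (-(w.re * R)) / w.re := by
        rw [integral_const_mul, integral_exp_mul_Ioi (neg_lt_zero.2 hw)]
        field_simp

lemma intervalIntegral_cexp_neg_mul_mul_cpow_mul_eq {s w : ℂ} (hs : s.re < 1) (hw : 0 < w.re)
    {R : ℝ} (hR : 0 ≤ R) :
    ∫ x in (0 : ℝ)..R, cexp (-w * x) * (w * x) ^ (-s) * w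
      = Gamma (1 - s) - w ^ (1 - s) * ∫ t in Ioi R, (t : ℂ) ^ (-s) * cexp (-(w * t)) := by
  have hw0 : w ≠ 0 := fun h ↦ by simp [h] at hw
  have ha : 0 < (1 - s).re := by simpa using hs
  have hint := integrableOn_ofReal_cpow_mul_cexp_neg_mul_Ioi ha hw
  have hlaplace := integral_ofReal_cpow_mul_cexp_neg_mul_Ioi ha hw
  rw [sub_sub_cancel_left] at hint hlaplace
  rw [← Ioc_union_Ioi_eq_Ioi hR, setIntegral_union (Ioc_disjoint_Ioi le_rfl) measurableSet_Ioi
    (hint.mono_set Ioc_subset_Ioi_self) (hint.mono_set (Ioi_subset_Ioi hR))] at hlaplace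
  have hcancel : w ^ (1 - s) * w ^ (-(1 - s)) = 1 := by
    rw [← cpow_add _ _ hw0, add_neg_cancel, cpow_zero]
  calc ∫ x in (0 : ℝ)..R, cexp (-w * x) * (w * x) ^ (-s) * w
      = w ^ (1 - s) * ∫ t in Ioc 0 R, (t : ℂ) ^ (-s) * cexp (-(w * t)) := by
        rw [intervalIntegral.integral_of_le hR, ← integral_const_mul]
        refine setIntegral_congr_fun measurableSet_Ioc fun x hx ↦ ?_
        rw [mul_ofReal_cpow hw0 hx.1, cpow_sub _ _ hw0, cpow_neg, cpow_one]
        field_simp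
    _ = w ^ (1 - s) * ((∫ t in Ioc 0 R, (t : ℂ) ^ (-s) * cexp (-(w * t)))
          + ∫ t in Ioi R, (t : ℂ) ^ (-s) * cexp (-(w * t)))
        - w ^ (1 - s) * ∫ t in Ioi R, (t : ℂ) ^ (-s) * cexp (-(w * t)) := by ring
    _ = _ := by rw [hlaplace, ← mul_assoc, hcancel, one_mul]

end Complex

theorem stmt12_general (β : ℝ) (hβ : β ∈ Set.Ioo (0:ℝ) 1)
    (u θ : ℝ) (hu : 0 < u) :
    ∃ C > (0:ℝ), ∀ R : ℝ, 1 ≤ R →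
      ‖(∫ x in (0:ℝ)..R,
          Complex.exp (-((u : ℂ) - θ * Complex.I) * x)
            * (((u : ℂ) - θ * Complex.I) * x) ^ (-(β : ℂ))
            * ((u : ℂ) - θ * Complex.I))
        - (Real.Gamma (1 - β) : ℂ)‖ ≤ C * R ^ (-β) := by
  obtain ⟨hβ0, hβ1⟩ := hβ
  set w : ℂ := u - θ * I
  have hw_re : w.re = u := by simp [w]
  have hw : 0 < w.re := hw_re ▸ hu
  have hw0 : w ≠ 0 := fun h ↦ by simp [h] at hw
  refine ⟨‖w ^ (1 - (β : ℂ))‖ / u, div_pos (norm_pos_iff.2 (cpow_ne_zero_iff.2 (.inl hw0))) hu,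
    fun R hR ↦ ?_⟩
  have hR0 : 0 < R := zero_lt_one.trans_le hR
  have htail := norm_integral_Ioi_ofReal_cpow_mul_cexp_neg_mul_le (s := β)
    (by simpa using hβ0.le) hw hR0
  have hΓ : (Real.Gamma (1 - β) : ℂ) = Complex.Gamma (1 - β) := by simp [← Complex.Gamma_ofReal]
  rw [intervalIntegral_cexp_neg_mul_mul_cpow_mul_eq (by simpa using hβ1) hw hR0.le, hΓ,
    sub_sub_cancel_left, norm_neg, norm_mul]
  simp only [ofReal_re, hw_re] at htail
  calc ‖w ^ (1 - (β : ℂ))‖ * ‖∫ t in Ioi R, (t : ℂ) ^ (-(β : ℂ)) * cexp (-(w * t))‖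
      ≤ ‖w ^ (1 - (β : ℂ))‖ * (R ^ (-β) * Real.exp (-(u * R)) / u) := by gcongr
    _ ≤ ‖w ^ (1 - (β : ℂ))‖ / u * R ^ (-β) := by
      rw [mul_div_assoc', div_mul_eq_mul_div]
      gcongr
      exact mul_le_of_le_one_right (by positivity) (Real.exp_le_one_iff.2 (by nlinarith))

/-- For `β ∈ (0,1)` and fixed `u > 0`, `θ ≠ 0`, the truncated contour
integral `∫_0^R e^{-(u-iθ)x} ((u-iθ)x)^{-β} (u-iθ) dx` equals `Γ(1-β) + O(R^{-β})`. -/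
theorem stmt12 (β : ℝ) (hβ : β ∈ Set.Ioo (0:ℝ) 1)
    (u θ : ℝ) (hu : 0 < u) (hθ : θ ≠ 0) :
    ∃ C > (0:ℝ), ∀ R : ℝ, 1 ≤ R →
      ‖(∫ x in (0:ℝ)..R,
          Complex.exp (-((u : ℂ) - θ * Complex.I) * x)
            * (((u : ℂ) - θ * Complex.I) * x) ^ (-(β : ℂ))
            * ((u : ℂ) - θ * Complex.I))
        - (Real.Gamma (1 - β) : ℂ)‖ ≤ C * R ^ (-β) :=
  stmt12_general β hβ u θ hu
end

section
/- Let ρ > 0 and γ ∈ (0,1). Then there exists a constant C > 0 such that for every integer n ≥ 1: |∫_{−n^{−γ}}^{n^{−γ}} e^{−inθ} (1/n − iθ)^{−(ρ+1)} dθ − (2π/e) n^ρ / Γ(1+ρ)| ≤ C n^{ργ}. -/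
/-!
After θ ↦ -θ the integrand is e^{inθ} (a + iθ)^{-s} with a = 1/n and s = ρ + 1. Over the whole
line this is a Fourier inversion integral: the Fourier transform of the gamma kernel
1_{t>0} t^{s-1} e^{-at} is Γ(s) (a + 2πiξ)^{-s}, the Laplace transform of t^{s-1} continued
analytically from real to complex arguments. Hence the integral over ℝ is exactly
2π n^ρ e^{-1} / Γ(s), and each tail |θ| > b = n^{-γ} contributes at most
∫_b^∞ θ^{-s} dθ = b^{-ρ}/ρ = n^{ργ}/ρ.
-/

open Complex Real MeasureTheory Set Filter Topology ProbabilityTheory FourierTransform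
open scoped ENNReal

lemma integrableOn_rpow_mul_exp_neg_mul {s c : ℝ} (hs : 0 < s) (hc : 0 < c) :
    IntegrableOn (fun t : ℝ ↦ t ^ (s - 1) * rexp (-(c * t))) (Ioi 0) := by
  simpa using
    integrableOn_rpow_mul_exp_neg_mul_rpow (p := 1) (by linarith : -1 < s - 1) one_pos hc

lemma analyticOnNhd_integral_rpow_mul_cexp_neg_mul {s : ℝ} (hs : 0 < s) :
    AnalyticOnNhd ℂ (fun w : ℂ ↦ ∫ t in Ioi (0:ℝ), ((t ^ (s - 1) : ℝ) : ℂ) * cexp (-(w * t)))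
      {w | 0 < w.re} := by
  -- The integral is the complex MGF of `t ↦ -t` under the measure `t ^ (s - 1) dt` on `(0, ∞)`.
  set μ : Measure ℝ :=
    (volume.restrict (Ioi 0)).withDensity fun t ↦ ((t ^ (s - 1)).toNNReal : ℝ≥0∞)
  have hdens : Measurable fun t : ℝ ↦ (t ^ (s - 1)).toNNReal := by fun_prop
  have hmgf : complexMGF (fun t ↦ -t) μ =
      fun w ↦ ∫ t in Ioi (0:ℝ), ((t ^ (s - 1) : ℝ) : ℂ) * cexp (-(w * t)) := by
    funext w
    rw [complexMGF, integral_withDensity_eq_integral_smul hdens]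
    refine setIntegral_congr_fun measurableSet_Ioi fun t ht ↦ ?_
    rw [NNReal.smul_def, Real.coe_toNNReal _ (rpow_nonneg (le_of_lt ht) _), Complex.real_smul]
    push_cast
    ring_nf
  have hexp : Ioi 0 ⊆ integrableExpSet (fun t ↦ -t) μ := by
    intro c hc
    rw [integrableExpSet, mem_ofPred_eq, integrable_withDensity_iff_integrable_smul hdens]
    refine (integrableOn_rpow_mul_exp_neg_mul hs hc).congr_fun (fun t ht ↦ ?_) measurableSet_Ioi
    rw [NNReal.smul_def, Real.coe_toNNReal _ (rpow_nonneg (le_of_lt ht) _), smul_eq_mul]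
    ring_nf
  rw [← hmgf]
  exact analyticOnNhd_complexMGF.mono fun w hw ↦ interior_mono hexp (by rwa [interior_Ioi])

lemma integral_rpow_mul_cexp_neg_mul_Ioi {s : ℝ} (hs : 0 < s) {w : ℂ} (hw : 0 < w.re) :
    ∫ t in Ioi (0:ℝ), ((t ^ (s - 1) : ℝ) : ℂ) * cexp (-(w * t))
      = Real.Gamma s * w ^ (-(s:ℂ)) := by
  -- Identity theorem: both sides are analytic on `re w > 0` and agree for real `w > 0`.
  have hU : IsPreconnected {w : ℂ | 0 < w.re} := (convex_halfSpace_re_gt 0).isPreconnected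
  have hpow :
      AnalyticOnNhd ℂ (fun w : ℂ ↦ (Real.Gamma s : ℂ) * w ^ (-(s:ℂ))) {w | 0 < w.re} :=
    fun w hw ↦ analyticAt_const.mul (analyticAt_id.cpow analyticAt_const (Or.inl hw))
  have hreal : ∀ r : ℝ, 0 < r → ∫ t in Ioi (0:ℝ), ((t ^ (s - 1) : ℝ) : ℂ) * cexp (-(r * t))
      = Real.Gamma s * (r:ℂ) ^ (-(s:ℂ)) := by
    intro r hr
    have h := congrArg ((↑) : ℝ → ℂ) (integral_rpow_mul_exp_neg_mul_Ioi hs hr)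
    rw [← integral_complex_ofReal, one_div, inv_rpow hr.le, ← rpow_neg hr.le] at h
    push_cast [ofReal_cpow hr.le] at h ⊢
    rwa [mul_comm]
  have hofReal : Tendsto ((↑) : ℝ → ℂ) (𝓝[≠] 1) (𝓝[≠] 1) := by
    refine tendsto_nhdsWithin_of_tendsto_nhds_of_eventually_within _ ?_ ?_
    · simpa using (continuous_ofReal.tendsto 1).mono_left nhdsWithin_le_nhds
    · exact eventually_nhdsWithin_of_forall fun x hx ↦ by simpa using hx
  refine (analyticOnNhd_integral_rpow_mul_cexp_neg_mul hs).eqOn_of_preconnected_of_frequently_eq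
    hpow hU (z₀ := 1) (by simp) (hofReal.frequently ?_) hw
  exact ((eventually_nhdsWithin_of_eventually_nhds (lt_mem_nhds one_pos)).mono hreal).frequently

noncomputable def gammaKernel (s a : ℝ) : ℝ → ℂ :=
  (Ioi 0).indicator fun t ↦ ((t ^ (s - 1) * rexp (-(a * t)) : ℝ) : ℂ)

lemma integrable_gammaKernel {s a : ℝ} (hs : 0 < s) (ha : 0 < a) :
    Integrable (gammaKernel s a) :=
  (integrable_indicator_iff measurableSet_Ioi).2 (integrableOn_rpow_mul_exp_neg_mul hs ha).ofReal

lemma continuousAt_gammaKernel {s a v : ℝ} (hv : 0 < v) : ContinuousAt (gammaKernel s a) v := by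
  have h : ContinuousAt (fun t : ℝ ↦ ((t ^ (s - 1) * rexp (-(a * t)) : ℝ) : ℂ)) v := by
    fun_prop (disch := exact Or.inl hv.ne')
  refine h.congr ?_
  filter_upwards [Ioi_mem_nhds hv] with t ht
  rw [gammaKernel, indicator_of_mem ht]

lemma fourier_gammaKernel {s a : ℝ} (hs : 0 < s) (ha : 0 < a) (ξ : ℝ) :
    𝓕 (gammaKernel s a) ξ = Real.Gamma s * ((a:ℂ) + (2 * π * ξ : ℝ) * I) ^ (-(s:ℂ)) := by
  rw [Real.fourier_real_eq_integral_exp_smul,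
    ← integral_rpow_mul_cexp_neg_mul_Ioi hs (by simpa using ha),
    ← integral_indicator measurableSet_Ioi]
  congr 1 with t
  by_cases ht : t ∈ Ioi 0
  · rw [gammaKernel, indicator_of_mem ht, indicator_of_mem ht, smul_eq_mul]
    push_cast
    rw [mul_left_comm, ← Complex.exp_add]
    congr 2
    ring
  · simp [gammaKernel, ht]

lemma integrable_cpow_neg {s a : ℝ} (hs : 1 < s) (ha : 0 < a) :
    Integrable fun θ : ℝ ↦ ((a:ℂ) + θ * I) ^ (-(s:ℂ)) := by
  have hJ : Integrable fun θ : ℝ ↦ (a ^ 2) ^ (-s / 2) * ((1:ℝ) + ‖θ / a‖ ^ 2) ^ (-s / 2) :=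
    ((integrable_rpow_neg_one_add_norm_sq (by simpa using hs)).comp_div ha.ne').const_mul _
  have hcont : Continuous fun θ : ℝ ↦ ((a:ℂ) + θ * I) ^ (-(s:ℂ)) :=
    (by fun_prop : Continuous fun θ : ℝ ↦ (a:ℂ) + θ * I).cpow continuous_const
      fun θ ↦ Or.inl (by simpa using ha)
  refine hJ.mono' hcont.aestronglyMeasurable (Eventually.of_forall fun θ ↦ le_of_eq ?_)
  rw [← ofReal_neg, norm_cpow_real, norm_add_mul_I, sqrt_eq_rpow, ← rpow_mul (by positivity),
    ← mul_rpow (by positivity) (by positivity), norm_div, Real.norm_eq_abs, Real.norm_eq_abs,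
    abs_of_pos ha, div_pow, sq_abs]
  congr 1
  · field_simp
  · ring

lemma integrable_fourier_gammaKernel {s a : ℝ} (hs : 1 < s) (ha : 0 < a) :
    Integrable (𝓕 (gammaKernel s a)) := by
  rw [funext (fourier_gammaKernel (by linarith) ha)]
  exact ((integrable_cpow_neg hs ha).comp_mul_left' (by positivity)).const_mul _

lemma integral_cexp_mul_cpow_neg {s a v : ℝ} (hs : 1 < s) (ha : 0 < a) (hv : 0 < v) :
    ∫ θ : ℝ, cexp (θ * v * I) * ((a:ℂ) + θ * I) ^ (-(s:ℂ))
      = ((2 * π * v ^ (s - 1) * rexp (-(a * v)) / Real.Gamma s : ℝ) : ℂ) := by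
  have hs0 : 0 < s := by linarith
  have hΓ : (Real.Gamma s : ℂ) ≠ 0 := ofReal_ne_zero.2 (Real.Gamma_pos_of_pos hs0).ne'
  have hinv := (integrable_gammaKernel hs0 ha).fourierInv_fourier_eq
    (integrable_fourier_gammaKernel hs ha) (continuousAt_gammaKernel hv)
  have hv' : gammaKernel s a v = ((v ^ (s - 1) * rexp (-(a * v)) : ℝ) : ℂ) :=
    indicator_of_mem (mem_Ioi.2 hv) _
  rw [fourierInv_eq_fourier_neg, Real.fourier_real_eq_integral_exp_smul, hv'] at hinv
  set g : ℝ → ℂ := fun θ ↦ cexp (θ * v * I) * ((a:ℂ) + θ * I) ^ (-(s:ℂ))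
  have hscaled :
      ∫ ξ : ℝ, g (2 * π * ξ) = ((v ^ (s - 1) * rexp (-(a * v)) : ℝ) : ℂ) / Real.Gamma s := by
    rw [eq_div_iff hΓ, ← hinv, mul_comm, ← integral_const_mul]
    congr 1 with ξ
    rw [fourier_gammaKernel hs0 ha, smul_eq_mul]
    dsimp only [g]
    push_cast
    ring_nf
  rw [Measure.integral_comp_mul_left, abs_of_pos (by positivity), Complex.real_smul, ofReal_inv,
    inv_mul_eq_iff_eq_mul₀ (ofReal_ne_zero.2 (by positivity))] at hscaled
  rw [hscaled]
  push_cast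
  ring

lemma integrable_cexp_mul_cpow_neg {s a : ℝ} (hs : 1 < s) (ha : 0 < a) (v : ℝ) :
    Integrable fun θ : ℝ ↦ cexp (θ * v * I) * ((a:ℂ) + θ * I) ^ (-(s:ℂ)) :=
  (integrable_cpow_neg hs ha).bdd_mul (c := 1) (by fun_prop)
    (Eventually.of_forall fun θ ↦ by rw [← ofReal_mul, norm_exp_ofReal_mul_I])

lemma norm_setIntegral_Ioi_le_of_norm_le_rpow {E : Type*} [NormedAddCommGroup E]
    [NormedSpace ℝ E] {s b : ℝ} (hs : 1 < s) (hb : 0 < b) {F : ℝ → E}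
    (hF : ∀ θ, b < θ → ‖F θ‖ ≤ θ ^ (-s)) :
    ‖∫ θ in Ioi b, F θ‖ ≤ b ^ (1 - s) / (s - 1) :=
  calc ‖∫ θ in Ioi b, F θ‖ ≤ ∫ θ in Ioi b, θ ^ (-s) :=
        norm_integral_le_of_norm_le (integrableOn_Ioi_rpow_of_lt (by linarith) hb)
          ((ae_restrict_iff' measurableSet_Ioi).2 (Eventually.of_forall hF))
    _ = b ^ (1 - s) / (s - 1) := by
        rw [integral_Ioi_rpow_of_lt (by linarith) hb, ← neg_div_neg_eq]
        ring_nf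

lemma norm_intervalIntegral_sub_integral_le {E : Type*} [NormedAddCommGroup E]
    [NormedSpace ℝ E] {s b : ℝ} (hs : 1 < s) (hb : 0 < b) {F : ℝ → E} (hF : Integrable F)
    (hbound : ∀ θ, b < |θ| → ‖F θ‖ ≤ |θ| ^ (-s)) :
    ‖(∫ θ in -b..b, F θ) - ∫ θ, F θ‖ ≤ 2 * (b ^ (1 - s) / (s - 1)) := by
  have htails : (∫ θ in -b..b, F θ) - ∫ θ, F θ
      = -((∫ θ in Ioi b, F θ) + ∫ θ in Ioi b, F (-θ)) := by
    rw [← intervalIntegral.integral_Iic_sub_Iic hF.integrableOn hF.integrableOn,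
      ← intervalIntegral.integral_Iic_add_Ioi hF.integrableOn hF.integrableOn (b := b),
      integral_comp_neg_Ioi]
    abel
  have hright : ∀ θ, b < θ → ‖F θ‖ ≤ θ ^ (-s) := fun θ hθ ↦ by
    simpa [abs_of_pos (hb.trans hθ)] using hbound θ (by rwa [abs_of_pos (hb.trans hθ)])
  have hleft : ∀ θ, b < θ → ‖F (-θ)‖ ≤ θ ^ (-s) := fun θ hθ ↦ by
    simpa [abs_of_pos (hb.trans hθ)] using
      hbound (-θ) (by rwa [abs_neg, abs_of_pos (hb.trans hθ)])
  rw [htails, norm_neg, two_mul]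
  exact (norm_add_le _ _).trans <| add_le_add
    (norm_setIntegral_Ioi_le_of_norm_le_rpow hs hb hright)
    (norm_setIntegral_Ioi_le_of_norm_le_rpow hs hb hleft)

lemma norm_cexp_mul_cpow_neg_le {s : ℝ} (hs : 0 ≤ s) (a v : ℝ) {θ : ℝ} (hθ : θ ≠ 0) :
    ‖cexp (θ * v * I) * ((a:ℂ) + θ * I) ^ (-(s:ℂ))‖ ≤ |θ| ^ (-s) := by
  rw [norm_mul, ← ofReal_mul, norm_exp_ofReal_mul_I, one_mul, ← ofReal_neg, norm_cpow_real]
  refine rpow_le_rpow_of_nonpos (abs_pos.2 hθ) ?_ (by linarith)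
  simpa using abs_im_le_norm ((a:ℂ) + θ * I)

theorem stmt14_general (ρ γ : ℝ) (hρ : 0 < ρ) :
    ∃ C > (0:ℝ), ∀ n : ℕ, 1 ≤ n →
      ‖(∫ θ in (-((n:ℝ) ^ (-γ)))..((n:ℝ) ^ (-γ)),
          Complex.exp (-(n : ℂ) * θ * Complex.I)
            * (((1 / (n:ℝ) : ℝ) : ℂ) - θ * Complex.I) ^ (-(ρ : ℂ) - 1))
        - ((2 * Real.pi / Real.exp 1 * (n:ℝ) ^ ρ / Real.Gamma (1 + ρ) : ℝ) : ℂ)‖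
      ≤ C * (n:ℝ) ^ (ρ * γ) := by
  refine ⟨2 / ρ, by positivity, fun n hn ↦ ?_⟩
  have hn0 : (0:ℝ) < n := by exact_mod_cast hn
  set b := (n:ℝ) ^ (-γ)
  have hb0 : 0 < b := by positivity
  set H : ℝ → ℂ :=
    fun θ ↦ cexp (θ * (n:ℝ) * I) * (((1 / n : ℝ) : ℂ) + θ * I) ^ (-((ρ + 1 : ℝ) : ℂ))
  have hsym : (∫ θ in -b..b, cexp (-(n : ℂ) * θ * I)
      * (((1 / (n:ℝ) : ℝ) : ℂ) - θ * I) ^ (-(ρ : ℂ) - 1)) = ∫ θ in -b..b, H θ := by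
    rw [← neg_neg b, ← intervalIntegral.integral_comp_neg, neg_neg]
    refine intervalIntegral.integral_congr fun θ _ ↦ ?_
    simp only [H]
    push_cast
    ring_nf
  have hfull : ∫ θ, H θ = ((2 * π / rexp 1 * (n:ℝ) ^ ρ / Real.Gamma (1 + ρ) : ℝ) : ℂ) := by
    rw [integral_cexp_mul_cpow_neg (by linarith) (by positivity) hn0, add_sub_cancel_right,
      one_div_mul_cancel hn0.ne', add_comm, Real.exp_neg]
    ring_nf
  have hb : b ^ (1 - (ρ + 1)) = (n:ℝ) ^ (ρ * γ) := by
    rw [← rpow_mul hn0.le]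
    ring_nf
  rw [hsym, ← hfull]
  calc _ ≤ 2 * (b ^ (1 - (ρ + 1)) / (ρ + 1 - 1)) :=
        norm_intervalIntegral_sub_integral_le (by linarith) hb0
          (integrable_cexp_mul_cpow_neg (by linarith) (by positivity) n)
          fun θ hθ ↦ norm_cexp_mul_cpow_neg_le (by linarith) _ _ (abs_pos.1 (hb0.trans hθ))
    _ = 2 / ρ * (n:ℝ) ^ (ρ * γ) := by
        rw [hb, add_sub_cancel_right]
        ring

/-- For `ρ > 0` and `γ ∈ (0,1)` there is `C > 0` such that for all `n ≥ 1`,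
`|∫_{-n^{-γ}}^{n^{-γ}} e^{-inθ} (1/n - iθ)^{-(ρ+1)} dθ - (2π/e) n^ρ/Γ(1+ρ)| ≤ C n^{ργ}`. -/
theorem stmt14 (ρ γ : ℝ) (hρ : 0 < ρ) (hγ : γ ∈ Set.Ioo (0:ℝ) 1) :
    ∃ C > (0:ℝ), ∀ n : ℕ, 1 ≤ n →
      ‖(∫ θ in (-((n:ℝ) ^ (-γ)))..((n:ℝ) ^ (-γ)),
          Complex.exp (-(n : ℂ) * θ * Complex.I)
            * (((1 / (n:ℝ) : ℝ) : ℂ) - θ * Complex.I) ^ (-(ρ : ℂ) - 1))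
        - ((2 * Real.pi / Real.exp 1 * (n:ℝ) ^ ρ / Real.Gamma (1 + ρ) : ℝ) : ℂ)‖
      ≤ C * (n:ℝ) ^ (ρ * γ) :=
  stmt14_general ρ γ hρ
end

section
/- Define f(x) = x(1 + x e^{−1/x}) for x ∈ (0, 1/2]. Let (x_n)_{n≥1} be a sequence in (0, 1/2] satisfying x_1 = 1/2 and f(x_{n+1}) = x_n for all n ≥ 1. Then lim_{n→∞} x_n · log n = 1. -/
/-! The sequence is decreasing and `f` has no fixed point in `(0, ∞)`, so `x n → 0`.
Since `1/x - 1/f(x) = 1/(exp (1/x) + x)`, the numbers `z n = exp (1/x n)` then satisfy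
`z (n+1) - z n = z (n+1) (1 - exp (-d n)) → 1` with `d n = 1/(z (n+1) + x (n+1)) → 0`.
By Stolz–Cesàro `z n / n → 1`, i.e. `1/x n = log n + o(1)`, whence `x n log n → 1`. -/

open Filter Real Topology

noncomputable def leftBranch (t : ℝ) : ℝ := t * (1 + t * exp (-(1 / t)))

theorem lt_leftBranch {t : ℝ} (ht : 0 < t) : t < leftBranch t := by
  have : 0 < t * t * exp (-(1 / t)) := by positivity
  unfold leftBranch
  linarith

theorem continuousAt_leftBranch {t : ℝ} (ht : t ≠ 0) : ContinuousAt leftBranch t := by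
  unfold leftBranch
  fun_prop (disch := assumption)

theorem inv_leftBranch {t : ℝ} (ht : 0 < t) :
    (leftBranch t)⁻¹ = t⁻¹ - (exp t⁻¹ + t)⁻¹ := by
  have := exp_pos t⁻¹
  unfold leftBranch
  rw [one_div, exp_neg]
  field_simp
  ring

theorem exp_inv_sub_exp_inv_leftBranch {t : ℝ} (ht : 0 < t) :
    exp t⁻¹ - exp (leftBranch t)⁻¹ = exp t⁻¹ * (1 - exp (-(exp t⁻¹ + t)⁻¹)) := by
  rw [inv_leftBranch ht, exp_sub, exp_neg, div_eq_mul_inv]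
  ring

theorem tendsto_mul_one_sub_exp_neg {ι : Type*} {l : Filter ι} {s d : ι → ℝ} {c : ℝ}
    (hs : ∀ i, 0 ≤ s i) (hd : Tendsto d l (𝓝 0)) (hsd : Tendsto (fun i => s i * d i) l (𝓝 c)) :
    Tendsto (fun i => s i * (1 - exp (-d i))) l (𝓝 c) := by
  have hlow : Tendsto (fun i => s i * d i * exp (-d i)) l (𝓝 c) := by
    simpa using hsd.mul ((continuous_exp.tendsto 0).comp (neg_zero (G := ℝ) ▸ hd.neg))
  refine tendsto_of_tendsto_of_tendsto_of_le_of_le hlow hsd (fun i => ?_) (fun i => ?_)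
  · have h := mul_le_mul_of_nonneg_right (add_one_le_exp (d i)) (exp_pos (-d i)).le
    rw [← exp_add, add_neg_cancel, exp_zero] at h
    simp only [mul_assoc]
    exact mul_le_mul_of_nonneg_left (by linarith) (hs i)
  · have h := add_one_le_exp (-d i)
    exact mul_le_mul_of_nonneg_left (by linarith) (hs i)

theorem tendsto_exp_inv_sub_exp_inv_leftBranch :
    Tendsto (fun t => exp t⁻¹ - exp (leftBranch t)⁻¹) (𝓝[>] 0) (𝓝 1) := by
  have ht : Tendsto (fun t : ℝ => t) (𝓝[>] 0) (𝓝 0) := tendsto_id.mono_left nhdsWithin_le_nhds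
  have hd : Tendsto (fun t => (exp t⁻¹ + t)⁻¹) (𝓝[>] 0) (𝓝 0) := by
    refine tendsto_of_tendsto_of_tendsto_of_le_of_le' tendsto_const_nhds ht ?_ ?_
    · filter_upwards [self_mem_nhdsWithin] with t (ht : 0 < t)
      positivity
    · filter_upwards [self_mem_nhdsWithin] with t (ht : 0 < t)
      refine inv_le_of_inv_le₀ ht ?_
      linarith [add_one_le_exp t⁻¹]
  have hsd : Tendsto (fun t => exp t⁻¹ * (exp t⁻¹ + t)⁻¹) (𝓝[>] 0) (𝓝 1) := by
    have := (tendsto_const_nhds (x := (1 : ℝ))).sub (ht.mul hd)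
    rw [mul_zero, sub_zero] at this
    refine this.congr' ?_
    filter_upwards [self_mem_nhdsWithin] with t (ht : 0 < t)
    have := exp_pos t⁻¹
    field_simp
    ring
  refine (tendsto_mul_one_sub_exp_neg (fun _ => (exp_pos _).le) hd hsd).congr' ?_
  filter_upwards [self_mem_nhdsWithin] with t (ht : 0 < t)
  exact (exp_inv_sub_exp_inv_leftBranch ht).symm

theorem tendsto_zero_of_map_succ_eq {g : ℝ → ℝ} (hg : ∀ t, 0 < t → t < g t)
    (hcont : ∀ t, t ≠ 0 → ContinuousAt g t) {a : ℕ → ℝ} (hpos : ∀ n, 0 < a n)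
    (hrec : ∀ n, g (a (n + 1)) = a n) : Tendsto a atTop (𝓝 0) := by
  have hanti : Antitone a := antitone_nat_of_succ_le fun n => hrec n ▸ (hg _ (hpos _)).le
  have hlim := tendsto_atTop_ciInf hanti ⟨0, Set.forall_mem_range.2 fun n => (hpos n).le⟩
  obtain hL | hL := (le_ciInf fun n => (hpos n).le : 0 ≤ ⨅ n, a n).eq_or_lt
  · rwa [← hL] at hlim
  · have h := (hcont _ hL.ne').tendsto.comp ((tendsto_add_atTop_iff_nat 1).2 hlim)
    simp only [Function.comp_def, hrec] at h
    exact absurd (tendsto_nhds_unique hlim h) (hg _ hL).ne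

theorem tendsto_div_natCast_of_tendsto_sub {u : ℕ → ℝ} {a : ℝ}
    (h : Tendsto (fun n => u (n + 1) - u n) atTop (𝓝 a)) :
    Tendsto (fun n => u n / n) atTop (𝓝 a) := by
  have h0 : Tendsto (fun n : ℕ => (n : ℝ)⁻¹ * u 0) atTop (𝓝 0) := by
    simpa using (tendsto_inv_atTop_zero.comp tendsto_natCast_atTop_atTop).mul_const (u 0)
  have := h.cesaro.add h0
  simp only [Finset.sum_range_sub, add_zero] at this
  refine this.congr fun n => ?_
  ring

theorem tendsto_div_log_of_tendsto_exp_div {y : ℕ → ℝ} {c : ℝ} (hc : 0 < c)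
    (h : Tendsto (fun n => exp (y n) / n) atTop (𝓝 c)) :
    Tendsto (fun n => y n / log n) atTop (𝓝 1) := by
  have hlog : Tendsto (fun n : ℕ => log n) atTop atTop :=
    tendsto_log_atTop.comp tendsto_natCast_atTop_atTop
  have hdiff : Tendsto (fun n => y n - log n) atTop (𝓝 (log c)) := by
    refine ((continuousAt_log hc.ne').tendsto.comp h).congr' ?_
    filter_upwards [eventually_ge_atTop 1] with n hn
    rw [Function.comp_apply, log_div (exp_pos _).ne' (by positivity), log_exp]
  have := (tendsto_const_nhds (x := (1 : ℝ))).add (hdiff.div_atTop hlog)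
  rw [add_zero] at this
  refine this.congr' ?_
  filter_upwards [hlog.eventually_gt_atTop 0] with n hn
  field_simp
  ring

theorem stmt15_general (x : ℕ → ℝ)
    (hmem : ∀ n : ℕ, 1 ≤ n → x n ∈ Set.Ioc (0:ℝ) (1 / 2))
    (hrec : ∀ n : ℕ, 1 ≤ n →
      x (n + 1) * (1 + x (n + 1) * Real.exp (-(1 / x (n + 1)))) = x n) :
    Tendsto (fun n : ℕ => x n * Real.log n) atTop (nhds 1) := by
  have hpos : ∀ n, 0 < x (n + 1) := fun n => (hmem (n + 1) (by omega)).1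
  have hrec' : ∀ n, leftBranch (x (n + 1 + 1)) = x (n + 1) := fun n => hrec (n + 1) (by omega)
  have hx0 : Tendsto (fun n => x (n + 1)) atTop (𝓝[>] 0) :=
    tendsto_nhdsWithin_iff.2 ⟨tendsto_zero_of_map_succ_eq (fun _ => lt_leftBranch) (fun _ => continuousAt_leftBranch)
      hpos hrec', Eventually.of_forall hpos⟩
  have hstep : Tendsto (fun n => exp (x (n + 1))⁻¹ - exp (x n)⁻¹) atTop (𝓝 1) := by
    rw [← tendsto_add_atTop_iff_nat 1]
    refine (tendsto_exp_inv_sub_exp_inv_leftBranch.comp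
      ((tendsto_add_atTop_iff_nat 1).2 hx0)).congr fun n => ?_
    simp only [Function.comp_apply, hrec']
  have := tendsto_div_log_of_tendsto_exp_div one_pos 
    (tendsto_div_natCast_of_tendsto_sub (u := fun n => exp (x n)⁻¹) hstep)
  simpa [inv_div, div_inv_eq_mul, mul_comm] using this.inv₀ one_ne_zero

/-- For the left branch `f(x) = x(1 + x e^{-1/x})` of the map (1.2),
the sequence `x_1 = 1/2`, `f(x_{n+1}) = x_n` (with `x_n ∈ (0,1/2]`) satisfies
`x_n · log n → 1` as `n → ∞`. -/
theorem stmt15 (x : ℕ → ℝ)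
    (hx1 : x 1 = 1 / 2)
    (hmem : ∀ n : ℕ, 1 ≤ n → x n ∈ Set.Ioc (0:ℝ) (1 / 2))
    (hrec : ∀ n : ℕ, 1 ≤ n →
      x (n + 1) * (1 + x (n + 1) * Real.exp (-(1 / x (n + 1)))) = x n) :
    Tendsto (fun n : ℕ => x n * Real.log n) atTop (nhds 1) :=
  stmt15_general x hmem hrec
end

section
/- Let 0 < β < 1 < q < 2 and let H : (0,∞) → ℂ be measurable with |H(x)| ≤ C_0 x^{−β} for 0 < x ≤ 1 and |H(x)| ≤ C_0 x^{−q} for x ≥ 1, for some constant C_0. Then there exists a constant C > 0 such that for all u > 0 and θ ∈ ℝ with 0 < |u − iθ| ≤ 1: |∫_0^∞ (e^{−(u−iθ)x} − 1) H(x) dx| ≤ C |u − iθ|^{q−1}. -/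
/-!
Since `β < q`, the two bounds on `H` combine into `‖H x‖ ≤ C₀ x^{-q}` on all of `(0, ∞)`.
With `z = u - iθ` and `Re z ≥ 0` one has `|e^{-zx} - 1| ≤ 2 min(1, |z| x)`, so the integrand is
dominated by `2 C₀ min(1, |z| x) x^{-q}`. The substitution `t = |z| x` turns the integral of this
majorant into `|z|^{q-1}` times `∫₀^∞ min(1, t) t^{-q} dt`, which is finite because `1 < q < 2`.
-/

open Complex Real MeasureTheory Set

lemma Complex.norm_exp_sub_one_le_two_mul_min {w : ℂ} (hw : w.re ≤ 0) :
    ‖exp w - 1‖ ≤ 2 * min 1 ‖w‖ := by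
  have hexp : ‖exp w‖ ≤ 1 := by
    rw [Complex.norm_exp]
    exact Real.exp_le_one_iff.mpr hw
  rw [mul_min_of_nonneg _ _ zero_le_two, mul_one]
  refine le_min ?_ ?_
  · calc ‖exp w - 1‖ ≤ ‖exp w‖ + ‖(1 : ℂ)‖ := norm_sub_le _ _
      _ ≤ 2 := by rw [norm_one]; linarith
  · rcases le_or_gt ‖w‖ 1 with hw1 | hw1
    · exact Complex.norm_exp_sub_one_le hw1
    · calc ‖exp w - 1‖ ≤ ‖exp w‖ + ‖(1 : ℂ)‖ := norm_sub_le _ _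
        _ ≤ 2 * ‖w‖ := by rw [norm_one]; linarith

lemma integrableOn_Ioi_min_one_mul_rpow_neg {q : ℝ} (hq1 : 1 < q) (hq2 : q < 2) :
    IntegrableOn (fun t : ℝ => min 1 t * t ^ (-q)) (Ioi 0) := by
  rw [← Ioc_union_Ioi_eq_Ioi zero_le_one]
  refine IntegrableOn.union ?_ ?_
  · have hpow : IntegrableOn (fun t : ℝ => t ^ (1 - q)) (Ioc 0 1) := by
      rw [← intervalIntegrable_iff_integrableOn_Ioc_of_le zero_le_one]
      exact intervalIntegral.intervalIntegrable_rpow' (by linarith)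
    refine hpow.congr_fun (fun t ht => ?_) measurableSet_Ioc
    dsimp only
    rw [min_eq_right ht.2, sub_eq_add_neg, Real.rpow_add ht.1, Real.rpow_one]
  · refine (integrableOn_Ioi_rpow_of_lt (by linarith : -q < -1) zero_lt_one).congr_fun
      (fun t ht => ?_) measurableSet_Ioi
    rw [min_eq_left (le_of_lt ht), one_mul]

lemma comp_mul_left_mul_rpow_neg_eq (φ : ℝ → ℝ) (q : ℝ) {r x : ℝ} (hr : 0 < r) (hx : 0 < x) :
    φ (r * x) * x ^ (-q) = r ^ q * (φ (r * x) * (r * x) ^ (-q)) := by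
  rw [Real.mul_rpow hr.le hx.le, Real.rpow_neg hr.le]
  field_simp [(Real.rpow_pos_of_pos hr q).ne']

lemma integrableOn_Ioi_comp_mul_left_mul_rpow_neg {φ : ℝ → ℝ} {q r : ℝ} (hr : 0 < r)
    (hφ : IntegrableOn (fun t => φ t * t ^ (-q)) (Ioi 0)) :
    IntegrableOn (fun x => φ (r * x) * x ^ (-q)) (Ioi 0) := by
  have hcomp : IntegrableOn (fun x => φ (r * x) * (r * x) ^ (-q)) (Ioi 0) := by
    rw [integrableOn_Ioi_comp_mul_left_iff (fun t => φ t * t ^ (-q)) 0 hr, mul_zero]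
    exact hφ
  exact IntegrableOn.congr_fun (hcomp.const_mul (r ^ q))
    (fun x hx => (comp_mul_left_mul_rpow_neg_eq φ q hr hx).symm) measurableSet_Ioi

lemma setIntegral_Ioi_comp_mul_left_mul_rpow_neg (φ : ℝ → ℝ) (q : ℝ) {r : ℝ} (hr : 0 < r) :
    ∫ x in Ioi 0, φ (r * x) * x ^ (-q) = r ^ (q - 1) * ∫ t in Ioi 0, φ t * t ^ (-q) := by
  rw [setIntegral_congr_fun measurableSet_Ioi
      (fun x hx => comp_mul_left_mul_rpow_neg_eq φ q hr hx),
    integral_const_mul, integral_comp_mul_left_Ioi (fun t => φ t * t ^ (-q)) 0 hr, mul_zero,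
    smul_eq_mul, ← mul_assoc, Real.rpow_sub_one hr.ne', div_eq_mul_inv]

theorem norm_setIntegral_Ioi_cexp_neg_mul_sub_one_mul_le {q C₀ : ℝ} (hq1 : 1 < q) (hq2 : q < 2)
    {H : ℝ → ℂ} (hH : ∀ x : ℝ, 0 < x → ‖H x‖ ≤ C₀ * x ^ (-q)) {z : ℂ} (hz : 0 ≤ z.re)
    (hz0 : z ≠ 0) :
    ‖∫ x in Ioi (0 : ℝ), (exp (-z * x) - 1) * H x‖
      ≤ 2 * C₀ * (∫ t in Ioi 0, min 1 t * t ^ (-q)) * ‖z‖ ^ (q - 1) := by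
  set r := ‖z‖
  have hr : 0 < r := norm_pos_iff.mpr hz0
  have hmajorant : IntegrableOn (fun x : ℝ => 2 * C₀ * (min 1 (r * x) * x ^ (-q))) (Ioi 0) :=
    (integrableOn_Ioi_comp_mul_left_mul_rpow_neg hr
      (integrableOn_Ioi_min_one_mul_rpow_neg hq1 hq2)).const_mul _
  have hbound : ∀ x ∈ Ioi (0 : ℝ),
      ‖(exp (-z * x) - 1) * H x‖ ≤ 2 * C₀ * (min 1 (r * x) * x ^ (-q)) := by
    intro x (hx : 0 < x)
    have hre : (-z * x).re ≤ 0 := by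
      simpa [Complex.mul_re] using mul_nonneg hz hx.le
    have hnorm : ‖-z * x‖ = r * x := by
      rw [norm_mul, norm_neg, Complex.norm_real, Real.norm_of_nonneg hx.le]
    rw [norm_mul]
    calc ‖exp (-z * x) - 1‖ * ‖H x‖ ≤ 2 * min 1 (r * x) * (C₀ * x ^ (-q)) := by
          refine mul_le_mul ?_ (hH x hx) (norm_nonneg _) (by positivity)
          exact hnorm ▸ Complex.norm_exp_sub_one_le_two_mul_min hre
      _ = 2 * C₀ * (min 1 (r * x) * x ^ (-q)) := by ring
  calc ‖∫ x in Ioi (0 : ℝ), (exp (-z * x) - 1) * H x‖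
      ≤ ∫ x in Ioi (0 : ℝ), 2 * C₀ * (min 1 (r * x) * x ^ (-q)) :=
        norm_integral_le_of_norm_le hmajorant
          ((ae_restrict_iff' measurableSet_Ioi).mpr (Filter.Eventually.of_forall hbound))
    _ = 2 * C₀ * (∫ t in Ioi 0, min 1 t * t ^ (-q)) * r ^ (q - 1) := by
        rw [integral_const_mul, setIntegral_Ioi_comp_mul_left_mul_rpow_neg (min 1) q hr]
        ring

theorem stmt18_general (β q : ℝ) (hβ1 : β < 1) (hq1 : 1 < q) (hq2 : q < 2)
    (H : ℝ → ℂ) (C₀ : ℝ)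
    (hH0 : ∀ x : ℝ, 0 < x → x ≤ 1 → ‖H x‖ ≤ C₀ * x ^ (-β))
    (hH1 : ∀ x : ℝ, 1 ≤ x → ‖H x‖ ≤ C₀ * x ^ (-q)) :
    ∃ C > (0:ℝ), ∀ u θ : ℝ, 0 < u →
      ‖(u : ℂ) - θ * Complex.I‖ ≤ 1 →
      ‖∫ x in Set.Ioi (0:ℝ),
          (Complex.exp (-((u : ℂ) - θ * Complex.I) * x) - 1) * H x‖
        ≤ C * ‖(u : ℂ) - θ * Complex.I‖ ^ (q - 1) := by
  have hH : ∀ x : ℝ, 0 < x → ‖H x‖ ≤ C₀ * x ^ (-q) := by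
    intro x hx
    rcases le_or_gt x 1 with hx1 | hx1
    · have hC₀ : 0 ≤ C₀ := (norm_nonneg _).trans (by simpa using hH1 1 le_rfl)
      calc ‖H x‖ ≤ C₀ * x ^ (-β) := hH0 x hx hx1
        _ ≤ C₀ * x ^ (-q) :=
          mul_le_mul_of_nonneg_left (Real.rpow_le_rpow_of_exponent_ge hx hx1 (by linarith)) hC₀
    · exact hH1 x hx1.le
  set K := ∫ t in Ioi (0 : ℝ), min 1 t * t ^ (-q)
  refine ⟨max (2 * C₀ * K) 1, lt_max_of_lt_right one_pos, fun u θ hu _ => ?_⟩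
  have hz : ((u : ℂ) - θ * Complex.I).re = u := by simp
  have hz0 : (u : ℂ) - θ * Complex.I ≠ 0 := fun h => hu.ne' (by simpa [h] using hz.symm)
  calc _ ≤ 2 * C₀ * K * ‖(u : ℂ) - θ * Complex.I‖ ^ (q - 1) :=
        norm_setIntegral_Ioi_cexp_neg_mul_sub_one_mul_le hq1 hq2 hH (by rw [hz]; exact hu.le) hz0
    _ ≤ _ := by gcongr; exact le_max_left _ _

/-- If `0 < β < 1 < q < 2` and `|H(x)| ≤ C₀ x^{-β}` for `x ≤ 1`,
`|H(x)| ≤ C₀ x^{-q}` for `x ≥ 1`, then there is `C > 0` such that for all `u > 0`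
and `θ ∈ ℝ` with `|u - iθ| ≤ 1`,
`|∫_0^∞ (e^{-(u-iθ)x} - 1) H(x) dx| ≤ C |u - iθ|^{q-1}`. -/
theorem stmt18 (β q : ℝ) (hβ : 0 < β) (hβ1 : β < 1) (hq1 : 1 < q) (hq2 : q < 2)
    (H : ℝ → ℂ) (hHmeas : Measurable H) (C₀ : ℝ)
    (hH0 : ∀ x : ℝ, 0 < x → x ≤ 1 → ‖H x‖ ≤ C₀ * x ^ (-β))
    (hH1 : ∀ x : ℝ, 1 ≤ x → ‖H x‖ ≤ C₀ * x ^ (-q)) :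
    ∃ C > (0:ℝ), ∀ u θ : ℝ, 0 < u →
      ‖(u : ℂ) - θ * Complex.I‖ ≤ 1 →
      ‖∫ x in Set.Ioi (0:ℝ),
          (Complex.exp (-((u : ℂ) - θ * Complex.I) * x) - 1) * H x‖
        ≤ C * ‖(u : ℂ) - θ * Complex.I‖ ^ (q - 1) :=
  stmt18_general β q hβ1 hq1 hq2 H C₀ hH0 hH1
end
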